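/- Let f = expr(v) · (⋃_{b∈B} expr(b))* be an unambiguous linear expression (B independent). Then every linear expression e = expr(u) · (⋃_{a∈A} expr(a))* such that the additive submonoid of ℕ^Σ generated by A is contained in the additive submonoid generated by B admits a decomposition: there exist expressions x and y with e ≡ x ∪ y, ⟦x⟧ ⊆ ⟦f⟧, and ⟦y⟧ ⊆ ⟦e⟧ \ ⟦f⟧. -/

import Mathlib

/-!
The coefficient vectors `c ∈ ℕ^A` with `u + ∑ c_a • a ∈ ⟦f⟧` form an upward closed set, because
`⟦f⟧ = v + ⟨B⟩` is stable under adding elements of `⟨A⟩ ⊆ ⟨B⟩`. By Dickson's lemma this set has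
finitely many minimal elements, so there is a bound `N` such that membership only depends on the
capped vector `min(c, N)`.

On the syntactic side, `(⋃_a a)* ≡ ∏_a a*` and `a* ≡ 1 ∪ a ∪ ⋯ ∪ a^(N-1) ∪ a^N a*`. Expanding `e`
accordingly writes it as a finite union of terms on each of which the capped coefficient vector is
constant, so each term lies entirely inside or entirely outside `⟦f⟧`; `x` and `y` collect the two
kinds of terms. Semantic side conditions are carried along `≡` by soundness of the axioms.
-/

namespace CKAnote

/-- Commutative regular expressions over an alphabet `α`. -/
inductive CRE (α : Type) where
  | zero : CRE α
  | one : CRE α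
  | letter : α → CRE α
  | mul : CRE α → CRE α → CRE α
  | union : CRE α → CRE α → CRE α
  | star : CRE α → CRE α

variable {α : Type} [Fintype α] [DecidableEq α]

/-- Semantics of a commutative regular expression as a set of Parikh vectors. -/
def sem : CRE α → Set (α → ℕ)
  | .zero => ∅
  | .one => {0}
  | .letter a => {Pi.single a 1}
  | .mul e f => {w | ∃ u ∈ sem e, ∃ v ∈ sem f, w = u + v}
  | .union e f => sem e ∪ sem f
  | .star e => ↑(AddSubmonoid.closure (sem e))

/-- Provable equality: the smallest congruence containing the axioms of
commutative Kleene algebra (where `e ≤ f` abbreviates `e ∪ f ≡ f`). -/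
inductive CKA : CRE α → CRE α → Prop
  | refl (e : CRE α) : CKA e e
  | symm {e f : CRE α} : CKA e f → CKA f e
  | trans {e f g : CRE α} : CKA e f → CKA f g → CKA e g
  | mul_congr {e e' f f' : CRE α} : CKA e e' → CKA f f' → CKA (e.mul f) (e'.mul f')
  | union_congr {e e' f f' : CRE α} : CKA e e' → CKA f f' → CKA (e.union f) (e'.union f')
  | star_congr {e e' : CRE α} : CKA e e' → CKA e.star e'.star
  | mul_assoc (e f g : CRE α) : CKA (e.mul (f.mul g)) ((e.mul f).mul g)
  | mul_comm (e f : CRE α) : CKA (e.mul f) (f.mul e)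
  | one_mul (e : CRE α) : CKA (CRE.one.mul e) e
  | union_assoc (e f g : CRE α) : CKA (e.union (f.union g)) ((e.union f).union g)
  | union_comm (e f : CRE α) : CKA (e.union f) (f.union e)
  | union_idem (e : CRE α) : CKA (e.union e) e
  | zero_union (e : CRE α) : CKA (CRE.zero.union e) e
  | zero_mul (e : CRE α) : CKA (CRE.zero.mul e) CRE.zero
  | left_distrib (e f g : CRE α) : CKA (e.mul (f.union g)) ((e.mul f).union (e.mul g))
  | star_unfold (e : CRE α) : CKA ((CRE.one.union (e.mul e.star)).union e.star) e.star
  | star_lfp {e f : CRE α} : CKA ((e.mul f).union f) f → CKA ((e.star.mul f).union f) f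

/-- `e ≤ f`, i.e. `e ∪ f ≡ f`. -/
def leq (e f : CRE α) : Prop := CKA (e.union f) f

/-- `e^n`, the `n`-fold product of `e` with itself. -/
def pow (e : CRE α) : ℕ → CRE α
  | 0 => CRE.one
  | n + 1 => e.mul (pow e n)

/-- `e^{<n}`, i.e. `(e ∪ 1)^(n-1)` for `n > 0` and `0` for `n = 0`. -/
def ltPow (e : CRE α) : ℕ → CRE α
  | 0 => CRE.zero
  | n + 1 => pow (e.union CRE.one) n

/-- Finite union of a list of expressions. -/
def unionList : List (CRE α) → CRE α
  | [] => CRE.zero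
  | e :: l => e.union (unionList l)

/-- Finite product of a list of expressions. -/
def prodList : List (CRE α) → CRE α
  | [] => CRE.one
  | e :: l => e.mul (prodList l)

/-- `expr(u)`: the product over `a ∈ α` of `u a` copies of the letter `a`. -/
noncomputable def exprVec (u : α → ℕ) : CRE α :=
  prodList ((Finset.univ : Finset α).toList.map (fun a => pow (CRE.letter a) (u a)))

/-- The union `⋃_{b ∈ B} expr(b)` for a finite set of Parikh vectors `B`. -/
noncomputable def unionVecs (B : Finset (α → ℕ)) : CRE α :=
  unionList (B.toList.map exprVec)

/-- The linear expression `expr(u) · (⋃_{b ∈ B} expr(b))*`. -/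
noncomputable def linExpr (u : α → ℕ) (B : Finset (α → ℕ)) : CRE α :=
  (exprVec u).mul (unionVecs B).star

/-- A finite set of Parikh vectors is independent when every Parikh vector
admits at most one representation as an `ℕ`-linear combination of its elements. -/
def Independent (B : Finset (α → ℕ)) : Prop :=
  ∀ c d : (α → ℕ) → ℕ, (∑ b ∈ B, c b • b) = (∑ b ∈ B, d b • b) → ∀ b ∈ B, c b = d b

/-- The semilinear expression associated to a list of linear data:
the finite union of the corresponding linear expressions. -/
noncomputable def semiLin (L : List ((α → ℕ) × Finset (α → ℕ))) : CRE α :=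
  unionList (L.map (fun p => linExpr p.1 p.2))

/-- The dimension of a semilinear expression: the maximum of the dimensions
of its linear components. -/
def dimSL (L : List ((α → ℕ) × Finset (α → ℕ))) : ℕ :=
  (L.map (fun p => p.2.card)).foldr max 0

/-- Finitary (star-free) expressions. -/
def NoStar : CRE α → Prop
  | .zero => True
  | .one => True
  | .letter _ => True
  | .mul e f => NoStar e ∧ NoStar f
  | .union e f => NoStar e ∧ NoStar f
  | .star _ => False

/-- Coordinatewise embedding of `ℕ^α` into `ℚ^α`. -/
def toQ (v : α → ℕ) : α → ℚ := fun a => (v a : ℚ)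

end CKAnote

open scoped Pointwise

theorem IsUpperSet.exists_forall_mem_iff_min_mem {ι : Type*} [Finite ι] {X : Set (ι → ℕ)}
    (hX : IsUpperSet X) : ∃ N : ℕ, ∀ c, c ∈ X ↔ (fun i => min (c i) N) ∈ X := by
  have hfin : {m | Minimal (· ∈ X) m}.Finite :=
    WellQuasiOrderedLE.finite_of_isAntichain (setOfPred_minimal_antichain _)
  obtain ⟨b, hb⟩ := hfin.bddAbove
  obtain ⟨N, hN⟩ := Finite.bddAbove_range b
  refine ⟨N, fun c => ⟨fun hc => ?_, hX fun i => min_le_left _ _⟩⟩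
  obtain ⟨m, hmc, hm⟩ := (Set.isPWO_of_wellQuasiOrderedLE X).exists_le_minimal hc
  exact hX (fun i => le_min (hmc i) ((hb hm i).trans (hN ⟨i, rfl⟩))) hm.prop

theorem AddSubmonoid.closure_add_subset {M : Type*} [AddMonoid M] {s t : Set M}
    (h : s + t ⊆ t) : (closure s : Set M) + t ⊆ t := by
  rintro _ ⟨x, hx, y, hy, rfl⟩
  induction hx using closure_induction generalizing y with
  | mem x hx => exact h ⟨x, hx, y, hy, rfl⟩
  | zero => simpa using hy
  | add x₁ x₂ _ _ ih₁ ih₂ => simpa only [add_assoc] using ih₁ _ (ih₂ y hy)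

namespace CKAnote

local infix:50 " ≡ " => CKA
local infix:50 " ⊑ " => leq

section Algebra

variable {α : Type} {e e' f f' g : CRE α}

instance : Trans (@CKA α) (@CKA α) (@CKA α) := ⟨CKA.trans⟩

theorem CKA.mul_one (e : CRE α) : e.mul .one ≡ e :=
  (CKA.mul_comm e .one).trans (CKA.one_mul e)

theorem CKA.mul_zero (e : CRE α) : e.mul .zero ≡ .zero :=
  (CKA.mul_comm e .zero).trans (CKA.zero_mul e)

theorem CKA.union_zero (e : CRE α) : e.union .zero ≡ e :=
  (CKA.union_comm e .zero).trans (CKA.zero_union e)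

theorem CKA.mul_left_comm (e f g : CRE α) : e.mul (f.mul g) ≡ f.mul (e.mul g) :=
  calc e.mul (f.mul g)
    _ ≡ (e.mul f).mul g := CKA.mul_assoc e f g
    _ ≡ (f.mul e).mul g := CKA.mul_congr (CKA.mul_comm e f) (CKA.refl g)
    _ ≡ f.mul (e.mul g) := (CKA.mul_assoc f e g).symm

theorem CKA.right_distrib (e f g : CRE α) :
    (e.union f).mul g ≡ (e.mul g).union (f.mul g) :=
  calc (e.union f).mul g
    _ ≡ (g.mul e).union (g.mul f) := (CKA.mul_comm _ _).trans (CKA.left_distrib g e f)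
    _ ≡ (e.mul g).union (f.mul g) := CKA.union_congr (CKA.mul_comm g e) (CKA.mul_comm g f)

theorem CKA.union_union_union_comm (e f g g' : CRE α) :
    (e.union f).union (g.union g') ≡ (e.union g).union (f.union g') :=
  calc (e.union f).union (g.union g')
    _ ≡ (e.union (f.union g)).union g' :=
        (CKA.union_assoc _ _ _).trans (CKA.union_congr (CKA.union_assoc _ _ _).symm (.refl _))
    _ ≡ (e.union (g.union f)).union g' :=
        CKA.union_congr (CKA.union_congr (.refl _) (CKA.union_comm f g)) (.refl _)
    _ ≡ (e.union g).union (f.union g') :=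
        (CKA.union_congr (CKA.union_assoc _ _ _) (.refl _)).trans (CKA.union_assoc _ _ _).symm

theorem leq.of_CKA (h : e ≡ f) : e ⊑ f :=
  (CKA.union_congr h (CKA.refl f)).trans (CKA.union_idem f)

theorem leq.refl (e : CRE α) : e ⊑ e := CKA.union_idem e

theorem leq.antisymm (h₁ : e ⊑ f) (h₂ : f ⊑ e) : e ≡ f :=
  (h₂.symm.trans (CKA.union_comm f e)).trans h₁

theorem leq.trans (h₁ : e ⊑ f) (h₂ : f ⊑ g) : e ⊑ g :=
  calc e.union g
    _ ≡ e.union (f.union g) := CKA.union_congr (.refl e) h₂.symm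
    _ ≡ (e.union f).union g := CKA.union_assoc e f g
    _ ≡ g := (CKA.union_congr h₁ (.refl g)).trans h₂

instance : Trans (@leq α) (@leq α) (@leq α) := ⟨leq.trans⟩

instance : Trans (@CKA α) (@leq α) (@leq α) := ⟨fun h₁ h₂ => (leq.of_CKA h₁).trans h₂⟩

instance : Trans (@leq α) (@CKA α) (@leq α) := ⟨fun h₁ h₂ => h₁.trans (leq.of_CKA h₂)⟩

theorem leq_union_left (e f : CRE α) : e ⊑ e.union f :=
  (CKA.union_assoc e e f).trans (CKA.union_congr (CKA.union_idem e) (.refl f))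

theorem leq_union_right (e f : CRE α) : f ⊑ e.union f :=
  ((leq_union_left f e).trans (leq.of_CKA (CKA.union_comm f e)))

theorem union_leq (h₁ : e ⊑ g) (h₂ : f ⊑ g) : e.union f ⊑ g :=
  ((CKA.union_assoc e f g).symm.trans (CKA.union_congr (.refl e) h₂)).trans h₁

theorem mul_leq_mul_left (e : CRE α) (h : f ⊑ f') : e.mul f ⊑ e.mul f' :=
  (CKA.left_distrib e f f').symm.trans (CKA.mul_congr (.refl e) h)

theorem mul_leq_mul_right (h : e ⊑ e') (f : CRE α) : e.mul f ⊑ e'.mul f :=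
  calc e.mul f
    _ ≡ f.mul e := CKA.mul_comm e f
    _ ⊑ f.mul e' := mul_leq_mul_left f h
    _ ≡ e'.mul f := CKA.mul_comm f e'

theorem one_union_mul_star_leq (e : CRE α) : CRE.one.union (e.mul e.star) ⊑ e.star :=
  CKA.star_unfold e

theorem one_leq_star (e : CRE α) : .one ⊑ e.star :=
  (leq_union_left _ _).trans (one_union_mul_star_leq e)

theorem mul_star_leq (e : CRE α) : e.mul e.star ⊑ e.star :=
  (leq_union_right _ _).trans (one_union_mul_star_leq e)

theorem star_leq (h₁ : .one ⊑ f) (h : e.mul f ⊑ f) : e.star ⊑ f :=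
  calc e.star
    _ ≡ e.star.mul .one := (CKA.mul_one _).symm
    _ ⊑ e.star.mul f := mul_leq_mul_left _ h₁
    _ ⊑ f := CKA.star_lfp h

theorem star_mono (h : e ⊑ f) : e.star ⊑ f.star :=
  star_leq (one_leq_star f) ((mul_leq_mul_right h _).trans (mul_star_leq f))

theorem CKA.star_zero : (CRE.zero : CRE α).star ≡ .one :=
  leq.antisymm (star_leq (.refl _) (leq.of_CKA (CKA.zero_mul _) |>.trans (CKA.zero_union _)))
    (one_leq_star _)

theorem CKA.star_eq_one_union (e : CRE α) : e.star ≡ CRE.one.union (e.mul e.star) := by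
  refine leq.antisymm (star_leq (leq_union_left _ _) ?_) (one_union_mul_star_leq e)
  calc e.mul (CRE.one.union (e.mul e.star))
    _ ≡ (e.mul .one).union (e.mul (e.mul e.star)) := CKA.left_distrib _ _ _
    _ ⊑ e.mul e.star := union_leq (mul_leq_mul_left e (one_leq_star e))
        (mul_leq_mul_left e (mul_star_leq e))
    _ ⊑ CRE.one.union (e.mul e.star) := leq_union_right _ _

theorem CKA.star_union (e f : CRE α) : (e.union f).star ≡ e.star.mul f.star := by
  refine leq.antisymm (star_leq ?_ ?_) ?_
  · calc CRE.one
      _ ≡ CRE.one.mul .one := (CKA.one_mul _).symm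
      _ ⊑ e.star.mul .one := mul_leq_mul_right (one_leq_star e) _
      _ ⊑ e.star.mul f.star := mul_leq_mul_left _ (one_leq_star f)
  · calc (e.union f).mul (e.star.mul f.star)
      _ ≡ (e.mul (e.star.mul f.star)).union (f.mul (e.star.mul f.star)) :=
          CKA.right_distrib _ _ _
      _ ≡ ((e.mul e.star).mul f.star).union (e.star.mul (f.mul f.star)) :=
          CKA.union_congr (CKA.mul_assoc _ _ _) (CKA.mul_left_comm _ _ _)
      _ ⊑ e.star.mul f.star := union_leq (mul_leq_mul_right (mul_star_leq e) _)
          (mul_leq_mul_left _ (mul_star_leq f))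
  · have h : e.mul (e.union f).star ⊑ (e.union f).star :=
      (mul_leq_mul_right (leq_union_left e f) _).trans (mul_star_leq _)
    calc e.star.mul f.star
      _ ⊑ e.star.mul (e.union f).star := mul_leq_mul_left _ (star_mono (leq_union_right e f))
      _ ⊑ (e.union f).star := CKA.star_lfp h

theorem CKA.mul_unionList (e : CRE α) :
    ∀ l : List (CRE α), e.mul (unionList l) ≡ unionList (l.map e.mul)
  | [] => CKA.mul_zero e
  | f :: l => (CKA.left_distrib e f _).trans (CKA.union_congr (.refl _) (CKA.mul_unionList e l))

theorem CKA.star_unionList :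
    ∀ l : List (CRE α), (unionList l).star ≡ prodList (l.map CRE.star)
  | [] => CKA.star_zero
  | e :: l => (CKA.star_union e _).trans (CKA.mul_congr (.refl _) (CKA.star_unionList l))

theorem CKA.unionList_mul (f : CRE α) :
    ∀ l : List (CRE α), (unionList l).mul f ≡ unionList (l.map (·.mul f))
  | [] => CKA.zero_mul f
  | e :: l => (CKA.right_distrib e _ f).trans (CKA.union_congr (.refl _) (CKA.unionList_mul f l))

theorem CKA.star_eq_unionList_pow_union (s : CRE α) :
    ∀ N, s.star ≡ (unionList ((List.range N).map (pow s))).union ((pow s N).mul s.star)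
  | 0 => ((CKA.zero_union _).trans (CKA.one_mul _)).symm
  | N + 1 => by
    set U := unionList ((List.range N).map (pow s))
    have hU : unionList ((List.range (N + 1)).map (pow s)) =
        CRE.one.union (unionList (((List.range N).map (pow s)).map s.mul)) := by
      simp only [List.range_succ_eq_map, List.map_cons, List.map_map, unionList]
      rfl
    rw [hU]
    calc s.star
      _ ≡ CRE.one.union (s.mul (U.union ((pow s N).mul s.star))) :=
          (CKA.star_eq_one_union s).trans (CKA.union_congr (.refl _)
            (CKA.mul_congr (.refl _) (CKA.star_eq_unionList_pow_union s N)))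
      _ ≡ CRE.one.union ((s.mul U).union (s.mul ((pow s N).mul s.star))) :=
          CKA.union_congr (.refl _) (CKA.left_distrib _ _ _)
      _ ≡ (CRE.one.union (s.mul U)).union ((pow s (N + 1)).mul s.star) :=
          (CKA.union_assoc _ _ _).trans (CKA.union_congr (.refl _) (CKA.mul_assoc _ _ _))
      _ ≡ _ := CKA.union_congr (CKA.union_congr (.refl _) (CKA.mul_unionList s _)) (.refl _)

theorem CKA.mul_mul_eq_of_eq_union (g f : CRE α) {e r : CRE α} {l : List (CRE α)}
    (h : e ≡ (unionList l).union r) :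
    g.mul (e.mul f) ≡ (unionList (l.map fun x => (g.mul x).mul f)).union ((g.mul r).mul f) :=
  calc g.mul (e.mul f)
    _ ≡ (g.mul ((unionList l).union r)).mul f :=
        (CKA.mul_assoc _ _ _).trans (CKA.mul_congr (CKA.mul_congr (.refl g) h) (.refl f))
    _ ≡ ((unionList (l.map g.mul)).mul f).union ((g.mul r).mul f) :=
        (CKA.mul_congr ((CKA.left_distrib _ _ _).trans
          (CKA.union_congr (CKA.mul_unionList g l) (.refl _))) (.refl f)).trans
          (CKA.right_distrib _ _ _)
    _ ≡ _ := by
        refine CKA.union_congr ?_ (.refl _)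
        simpa only [List.map_map, Function.comp_def] using CKA.unionList_mul f (l.map g.mul)

theorem CKA.linExpr_eq_mul_prodList_star [Fintype α] (u : α → ℕ) (A : Finset (α → ℕ)) :
    linExpr u A ≡ (exprVec u).mul (prodList (A.toList.map fun a => (exprVec a).star)) := by
  refine CKA.mul_congr (.refl _) ?_
  simpa only [unionVecs, List.map_map, Function.comp_def] using
    CKA.star_unionList (A.toList.map exprVec)

end Algebra

section Semantics

variable {α : Type} [DecidableEq α] {e f : CRE α}

theorem sem_zero : sem (CRE.zero : CRE α) = ∅ := rfl

theorem sem_one : sem (CRE.one : CRE α) = 0 := rfl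

theorem sem_union (e f : CRE α) : sem (e.union f) = sem e ∪ sem f := rfl

theorem sem_star (e : CRE α) : sem e.star = AddSubmonoid.closure (sem e) := rfl

theorem sem_mul (e f : CRE α) : sem (e.mul f) = sem e + sem f := by
  ext w
  simp only [sem, Set.mem_ofPred_eq, Set.mem_add, eq_comm]

theorem CKA.sem_eq (h : e ≡ f) : sem e = sem f := by
  induction h with
  | refl => rfl
  | symm _ ih => exact ih.symm
  | trans _ _ ih₁ ih₂ => exact ih₁.trans ih₂
  | mul_congr _ _ ih₁ ih₂ => rw [sem_mul, sem_mul, ih₁, ih₂]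
  | union_congr _ _ ih₁ ih₂ => rw [sem_union, sem_union, ih₁, ih₂]
  | star_congr _ ih => rw [sem_star, sem_star, ih]
  | mul_assoc => simp only [sem_mul, add_assoc]
  | mul_comm => simp only [sem_mul]; exact add_comm _ _
  | one_mul => rw [sem_mul, sem_one, zero_add]
  | union_assoc => exact (Set.union_assoc _ _ _).symm
  | union_comm => exact Set.union_comm _ _
  | union_idem => exact Set.union_self _
  | zero_union => exact Set.empty_union _
  | zero_mul => rw [sem_mul, sem_zero, Set.empty_add]
  | left_distrib => simp only [sem_mul, sem_union, Set.add_union]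
  | star_unfold e =>
    rw [sem_union, sem_union, sem_mul, sem_one, sem_star]
    refine Set.union_eq_right.mpr (Set.union_subset ?_ ?_)
    · exact Set.singleton_subset_iff.mpr (zero_mem _)
    · rintro _ ⟨x, hx, y, hy, rfl⟩
      exact add_mem (AddSubmonoid.subset_closure hx) hy
  | star_lfp _ ih =>
    rw [sem_union, sem_mul] at ih ⊢
    exact Set.union_eq_right.mpr (AddSubmonoid.closure_add_subset (Set.union_eq_right.mp ih))

theorem mem_sem_unionList {w : α → ℕ} {l : List (CRE α)} :
    w ∈ sem (unionList l) ↔ ∃ e ∈ l, w ∈ sem e := by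
  induction l with
  | nil => simp [unionList, sem]
  | cons e l ih => simp [unionList, sem, ih]

theorem sem_pow {a : α → ℕ} (h : sem e = {a}) : ∀ n : ℕ, sem (pow e n) = {n • a}
  | 0 => by simp [pow, sem]
  | n + 1 => by rw [pow, sem_mul, h, sem_pow h n, Set.singleton_add_singleton, succ_nsmul']

theorem sem_prodList_map {β : Type*} (φ : β → CRE α) (v : β → α → ℕ)
    (h : ∀ b, sem (φ b) = {v b}) : ∀ l : List β, sem (prodList (l.map φ)) = {(l.map v).sum}
  | [] => rfl
  | b :: l => by
    rw [List.map_cons, prodList, sem_mul, h, sem_prodList_map φ v h l,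
      Set.singleton_add_singleton, List.map_cons, List.sum_cons]

end Semantics

section ExprVec

variable {α : Type} [Fintype α] [DecidableEq α]

theorem sem_exprVec (u : α → ℕ) : sem (exprVec u) = {u} := by
  have h a : sem (pow (CRE.letter a) (u a)) = {Pi.single a (u a)} := by
    rw [sem_pow (by rfl) (u a), ← Pi.single_smul, smul_eq_mul, mul_one]
  rw [exprVec, sem_prodList_map _ _ h, Finset.sum_map_toList, Finset.univ_sum_single]

theorem sem_unionVecs (A : Finset (α → ℕ)) : sem (unionVecs A) = A := by
  ext w
  simp [unionVecs, mem_sem_unionList, sem_exprVec]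

theorem mem_sem_linExpr {u w : α → ℕ} {A : Finset (α → ℕ)} :
    w ∈ sem (linExpr u A) ↔ ∃ x ∈ AddSubmonoid.closure (A : Set (α → ℕ)), u + x = w := by
  simp [linExpr, sem_mul, sem_star, sem_exprVec, sem_unionVecs]

end ExprVec

section Decomposition

variable {α : Type} [DecidableEq α] {S : Set (α → ℕ)} {e f : CRE α}

def Decomposes (S : Set (α → ℕ)) (e : CRE α) : Prop :=
  ∃ x y : CRE α, (e ≡ x.union y) ∧ sem x ⊆ S ∧ sem y ⊆ sem e \ S

namespace Decomposes

theorem of_CKA (h : e ≡ f) (hf : Decomposes S f) : Decomposes S e := by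
  obtain ⟨x, y, hxy, hx, hy⟩ := hf
  exact ⟨x, y, h.trans hxy, hx, h.sem_eq ▸ hy⟩

theorem union (he : Decomposes S e) (hf : Decomposes S f) : Decomposes S (e.union f) := by
  obtain ⟨x, y, hxy, hx, hy⟩ := he
  obtain ⟨x', y', hxy', hx', hy'⟩ := hf
  refine ⟨x.union x', y.union y', ?_, Set.union_subset hx hx', ?_⟩
  · exact (CKA.union_congr hxy hxy').trans (CKA.union_union_union_comm _ _ _ _)
  · rw [sem_union, sem_union, Set.union_sdiff_distrib]
    exact Set.union_subset_union hy hy'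

theorem of_forall_mem (h : ∀ w ∈ sem e, ∀ w' ∈ sem e, w ∈ S → w' ∈ S) : Decomposes S e := by
  by_cases hS : ∃ w ∈ sem e, w ∈ S
  · obtain ⟨w, hw, hwS⟩ := hS
    exact ⟨e, .zero, (CKA.union_zero e).symm, fun w' hw' => h w hw w' hw' hwS,
      Set.empty_subset _⟩
  · exact ⟨.zero, e, (CKA.zero_union e).symm, Set.empty_subset _,
      fun w hw => ⟨hw, fun hwS => hS ⟨w, hw, hwS⟩⟩⟩

theorem unionList {l : List (CRE α)} (h : ∀ e ∈ l, Decomposes S e) :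
    Decomposes S (unionList l) := by
  induction l with
  | nil => exact of_forall_mem fun w hw => absurd hw (Set.notMem_empty w)
  | cons e l ih =>
    exact (h e List.mem_cons_self).union (ih fun f hf => h f (List.mem_cons_of_mem e hf))

end Decomposes

end Decomposition

section CapInvariant

variable {α : Type} {S : Set (α → ℕ)}

def CapInvariant (S : Set (α → ℕ)) (N : ℕ) (L : List (α → ℕ)) (W : Set (α → ℕ)) : Prop :=
  ∀ w ∈ W, ∀ w' ∈ W, ∀ c c' : (α → ℕ) → ℕ, (∀ a ∈ L, min (c a) N = min (c' a) N) →
    w + (L.map fun a => c a • a).sum ∈ S → w' + (L.map fun a => c' a • a).sum ∈ S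

theorem CapInvariant.of_cons {N : ℕ} {a : α → ℕ} {L : List (α → ℕ)} {W W' : Set (α → ℕ)}
    (h : CapInvariant S N (a :: L) W) (ha : a ∉ L) (j : ℕ)
    (hW' : ∀ w' ∈ W', ∃ w ∈ W, ∃ k, min k N = j ∧ w' = w + k • a) :
    CapInvariant S N L W' := by
  classical
  intro w₁ hw₁ w₂ hw₂ c c' hcc' hmem
  obtain ⟨w, hw, k, hk, rfl⟩ := hW' w₁ hw₁
  obtain ⟨w', hw', k', hk', rfl⟩ := hW' w₂ hw₂
  have hsum (d : (α → ℕ) → ℕ) (n : ℕ) :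
      ((a :: L).map fun b => Function.update d a n b • b).sum =
        n • a + (L.map fun b => d b • b).sum := by
    rw [List.map_cons, List.sum_cons, Function.update_self]
    congr 2
    refine List.map_congr_left fun b hb => ?_
    rw [Function.update_of_ne (ne_of_mem_of_not_mem hb ha)]
  have hcap : ∀ b ∈ a :: L,
      min (Function.update c a k b) N = min (Function.update c' a k' b) N := by
    intro b hb
    rcases List.mem_cons.mp hb with rfl | hb
    · simp only [Function.update_self, hk, hk']
    · rw [Function.update_of_ne (ne_of_mem_of_not_mem hb ha),
        Function.update_of_ne (ne_of_mem_of_not_mem hb ha), hcc' b hb]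
  have := h w hw w' hw' _ _ hcap (by rwa [hsum, ← add_assoc])
  rwa [hsum, ← add_assoc] at this

theorem capInvariant_singleton_of_mem_iff {u : α → ℕ} {A : Finset (α → ℕ)} {N : ℕ}
    (h : ∀ c : A → ℕ, u + ∑ a, c a • (a : α → ℕ) ∈ S ↔
      u + ∑ a, min (c a) N • (a : α → ℕ) ∈ S) :
    CapInvariant S N A.toList {u} := by
  rintro _ rfl _ rfl c c' hcc' hc
  have hsum (d : (α → ℕ) → ℕ) :
      (A.toList.map fun a => d a • a).sum = ∑ a : A, d a • (a : α → ℕ) := by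
    rw [Finset.sum_map_toList, ← Finset.sum_coe_sort]
  have hmin (a : A) : min (c a) N = min (c' a) N := hcc' a (Finset.mem_toList.mpr a.2)
  rw [hsum] at hc ⊢
  exact (h fun a => c' a).mpr (by simpa only [← hmin] using (h fun a => c a).mp hc)

end CapInvariant

section LinearExpressions

variable {α : Type} [Fintype α] [DecidableEq α] {S : Set (α → ℕ)}

theorem mem_sem_mul_pow_exprVec {g : CRE α} {a w' : α → ℕ} {i : ℕ}
    (h : w' ∈ sem (g.mul (pow (exprVec a) i))) : ∃ w ∈ sem g, w' = w + i • a := by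
  rw [sem_mul, sem_pow (sem_exprVec a), Set.add_singleton] at h
  obtain ⟨w, hw, rfl⟩ := h
  exact ⟨w, hw, rfl⟩

theorem mem_sem_mul_pow_mul_star {g : CRE α} {a w' : α → ℕ} {N : ℕ}
    (h : w' ∈ sem (g.mul ((pow (exprVec a) N).mul (exprVec a).star))) :
    ∃ w ∈ sem g, ∃ k, N ≤ k ∧ w' = w + k • a := by
  rw [sem_mul, sem_mul, sem_pow (sem_exprVec a), sem_star, sem_exprVec] at h
  obtain ⟨w, hw, _, ⟨_, rfl, x, hx, rfl⟩, rfl⟩ := h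
  obtain ⟨m, rfl⟩ := AddSubmonoid.mem_closure_singleton.mp hx
  exact ⟨w, hw, N + m, Nat.le_add_right N m, by rw [add_nsmul]⟩

theorem decomposes_mul_prodList_star (N : ℕ) : ∀ {L : List (α → ℕ)}, L.Nodup →
    ∀ {g : CRE α}, CapInvariant S N L (sem g) →
      Decomposes S (g.mul (prodList (L.map fun a => (exprVec a).star)))
  | [], _, g, hg => .of_CKA (CKA.mul_one g) <| .of_forall_mem fun w hw w' hw' hwS => by
      simpa using hg w hw w' hw' 0 0 (by simp) (by simpa using hwS)
  | a :: L, hL, g, hg => by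
    obtain ⟨ha, hL⟩ := List.nodup_cons.mp hL
    refine .of_CKA (CKA.mul_mul_eq_of_eq_union g _ (CKA.star_eq_unionList_pow_union _ N))
      (.union (.unionList ?_) ?_)
    · simp only [List.map_map, List.mem_map, List.mem_range]
      rintro _ ⟨i, hi, rfl⟩
      refine decomposes_mul_prodList_star N hL (hg.of_cons ha i fun w' hw' => ?_)
      obtain ⟨w, hw, rfl⟩ := mem_sem_mul_pow_exprVec hw'
      exact ⟨w, hw, i, min_eq_left hi.le, rfl⟩
    · refine decomposes_mul_prodList_star N hL (hg.of_cons ha N fun w' hw' => ?_)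
      obtain ⟨w, hw, k, hk, rfl⟩ := mem_sem_mul_pow_mul_star hw'
      exact ⟨w, hw, k, min_eq_right hk, rfl⟩

theorem isUpperSet_setOf_add_sum_mem_sem_linExpr (u v : α → ℕ) {A B : Finset (α → ℕ)}
    (hAB : AddSubmonoid.closure (A : Set (α → ℕ)) ≤ AddSubmonoid.closure (B : Set (α → ℕ))) :
    IsUpperSet {c : A → ℕ | u + ∑ a, c a • (a : α → ℕ) ∈ sem (linExpr v B)} := by
  intro c d hcd hc
  obtain ⟨x, hx, hxc⟩ := mem_sem_linExpr.mp hc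
  have hd : ∑ a, d a • (a : α → ℕ) = ∑ a, c a • (a : α → ℕ) + ∑ a, (d a - c a) • (a : α → ℕ) := by
    rw [← Finset.sum_add_distrib]
    exact Finset.sum_congr rfl fun a _ => by rw [← add_nsmul, Nat.add_sub_cancel' (hcd a)]
  refine mem_sem_linExpr.mpr ⟨x + ∑ a, (d a - c a) • (a : α → ℕ), add_mem hx (hAB ?_), ?_⟩
  · exact sum_mem fun a _ => nsmul_mem (AddSubmonoid.subset_closure a.2) _
  · rw [hd, ← add_assoc, ← add_assoc, hxc]

end LinearExpressions

variable {α : Type} [Fintype α] [DecidableEq α]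

theorem dec_compatible_general (v : α → ℕ) (B : Finset (α → ℕ))
    (u : α → ℕ) (A : Finset (α → ℕ))
    (hAB : AddSubmonoid.closure (A : Set (α → ℕ)) ≤
           AddSubmonoid.closure (B : Set (α → ℕ))) :
    ∃ x y : CRE α, CKA (linExpr u A) (x.union y) ∧
      sem x ⊆ sem (linExpr v B) ∧
      sem y ⊆ sem (linExpr u A) \ sem (linExpr v B) := by
  obtain ⟨N, hN⟩ := (isUpperSet_setOf_add_sum_mem_sem_linExpr u v hAB).exists_forall_mem_iff_min_mem
  have hu : CapInvariant (sem (linExpr v B)) N A.toList (sem (exprVec u)) := by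
    rw [sem_exprVec]
    exact capInvariant_singleton_of_mem_iff hN
  exact Decomposes.of_CKA (CKA.linExpr_eq_mul_prodList_star u A)
    (decomposes_mul_prodList_star N A.nodup_toList hu)

/-- Decomposition of compatible linear expressions: if `B` is independent and
the submonoid generated by `A` is contained in the one generated by `B`, then
`e = expr(u)·(⋃_{a∈A} expr(a))*` can be decomposed with respect to
`f = expr(v)·(⋃_{b∈B} expr(b))*`. -/
theorem dec_compatible (v : α → ℕ) (B : Finset (α → ℕ)) (hB : Independent B)
    (u : α → ℕ) (A : Finset (α → ℕ))
    (hAB : AddSubmonoid.closure (A : Set (α → ℕ)) ≤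
           AddSubmonoid.closure (B : Set (α → ℕ))) :
    ∃ x y : CRE α, CKA (linExpr u A) (x.union y) ∧
      sem x ⊆ sem (linExpr v B) ∧
      sem y ⊆ sem (linExpr u A) \ sem (linExpr v B) :=
  dec_compatible_general v B u A hAB

end CKAnote
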